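/- Let λ > 0 and K > λ·G(1)·H(1), and let (u_n, v_n) be the sequence produced by the monotone iteration scheme starting from (u₁, v₁) = (−u₀, −v₀). Then for every n ≥ 1 and every x ∈ V one has u_{n+1}(x) < u_n(x) and v_{n+1}(x) < v_n(x). -/

import Mathlib

open Real Finset

/-- The μ-Laplacian on a finite weighted graph. -/
noncomputable def graphLap {V : Type*} [Fintype V] (ω : V → V → ℝ) (μ : V → ℝ)
    (f : V → ℝ) (x : V) : ℝ :=
  (1 / μ x) * ∑ y, ω x y * (f y - f x)

/-- The integral of `f` over `V` with respect to the measure `μ`. -/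
noncomputable def graphInt {V : Type*} [Fintype V] (μ : V → ℝ) (f : V → ℝ) : ℝ :=
  ∑ x, μ x * f x

/-- The total volume `|V|` of the graph. -/
noncomputable def graphVol {V : Type*} [Fintype V] (μ : V → ℝ) : ℝ :=
  ∑ x, μ x

/-- The Dirac delta mass at vertex `p`. -/
noncomputable def diracDelta {V : Type*} [DecidableEq V] (μ : V → ℝ) (p x : V) : ℝ :=
  if x = p then 1 / μ p else 0

/-- `primFun F t = ∫_{√t}^{1} 2 s F(s²) ds`; this gives `g` from `G` and `h` from `H`. -/
noncomputable def primFun (F : ℝ → ℝ) (t : ℝ) : ℝ :=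
  ∫ s in Real.sqrt t..(1 : ℝ), 2 * s * F (s ^ 2)

/-- The pointwise squared gradient `|∇ f|²(x)`. -/
noncomputable def gradSq {V : Type*} [Fintype V] (ω : V → V → ℝ) (μ : V → ℝ)
    (f : V → ℝ) (x : V) : ℝ :=
  (1 / (2 * μ x)) * ∑ y, ω x y * (f y - f x) ^ 2

/-- The gradient norm `‖∇ f‖₂ = (∫_V |∇ f|² dμ)^{1/2}`. -/
noncomputable def gradNorm {V : Type*} [Fintype V] (ω : V → V → ℝ) (μ : V → ℝ)
    (f : V → ℝ) : ℝ :=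
  Real.sqrt (graphInt μ (gradSq ω μ f))

/-- The mean value `f̄ = (1/|V|) ∫_V f dμ`. -/
noncomputable def graphAvg {V : Type*} [Fintype V] (μ : V → ℝ) (f : V → ℝ) : ℝ :=
  (1 / graphVol μ) * graphInt μ f

/-- The `W^{1,2}(V)` norm, `(∫_V (|∇ f|² + f²) dμ)^{1/2}`. -/
noncomputable def sobolevNorm {V : Type*} [Fintype V] (ω : V → V → ℝ) (μ : V → ℝ)
    (f : V → ℝ) : ℝ :=
  Real.sqrt (graphInt μ (fun x => gradSq ω μ f x + f x ^ 2))

/-- `(u, v)` is a solution of the system `(S_λ)`. -/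
def isSolution {V : Type*} [Fintype V] (ω : V → V → ℝ) (μ : V → ℝ)
    (G H : ℝ → ℝ) (N1 N2 : ℕ) (u₀ v₀ : V → ℝ) (lam : ℝ) (u v : V → ℝ) : Prop :=
  ∀ x, graphLap ω μ u x =
      -lam * Real.exp (v₀ x + v x) * H (Real.exp (v₀ x + v x)) *
        primFun G (Real.exp (u₀ x + u x)) + 4 * Real.pi * N1 / graphVol μ ∧
    graphLap ω μ v x =
      -lam * Real.exp (u₀ x + u x) * G (Real.exp (u₀ x + u x)) *
        primFun H (Real.exp (v₀ x + v x)) + 4 * Real.pi * N2 / graphVol μ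

/-- `(u, v)` is a lower solution of the system `(S_λ)`. -/
def isLowerSolution {V : Type*} [Fintype V] (ω : V → V → ℝ) (μ : V → ℝ)
    (G H : ℝ → ℝ) (N1 N2 : ℕ) (u₀ v₀ : V → ℝ) (lam : ℝ) (u v : V → ℝ) : Prop :=
  ∀ x, graphLap ω μ u x ≥
      -lam * Real.exp (v₀ x + v x) * H (Real.exp (v₀ x + v x)) *
        primFun G (Real.exp (u₀ x + u x)) + 4 * Real.pi * N1 / graphVol μ ∧
    graphLap ω μ v x ≥
      -lam * Real.exp (u₀ x + u x) * G (Real.exp (u₀ x + u x)) *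
        primFun H (Real.exp (v₀ x + v x)) + 4 * Real.pi * N2 / graphVol μ

/-- `(uM, vM)` is a maximal solution of `(S_λ)`: it solves the system and any other
solution lies strictly below it. -/
def isMaximalSolution {V : Type*} [Fintype V] (ω : V → V → ℝ) (μ : V → ℝ)
    (G H : ℝ → ℝ) (N1 N2 : ℕ) (u₀ v₀ : V → ℝ) (lam : ℝ) (uM vM : V → ℝ) : Prop :=
  isSolution ω μ G H N1 N2 u₀ v₀ lam uM vM ∧
    ∀ u' v', isSolution ω μ G H N1 N2 u₀ v₀ lam u' v' → (u', v') ≠ (uM, vM) →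
      ∀ x, u' x < uM x ∧ v' x < vM x

section Aux

variable {V : Type*} [Fintype V]

lemma graphLap_add (ω : V → V → ℝ) (μ : V → ℝ) (f g : V → ℝ) (x : V) :
    graphLap ω μ (fun y => f y + g y) x = graphLap ω μ f x + graphLap ω μ g x := by
  unfold graphLap
  rw [← mul_add, ← Finset.sum_add_distrib]
  exact congrArg _ (Finset.sum_congr rfl fun y _ => by ring)

lemma graphLap_sub (ω : V → V → ℝ) (μ : V → ℝ) (f g : V → ℝ) (x : V) :
    graphLap ω μ (fun y => f y - g y) x = graphLap ω μ f x - graphLap ω μ g x := by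
  unfold graphLap
  rw [← mul_sub, ← Finset.sum_sub_distrib]
  exact congrArg _ (Finset.sum_congr rfl fun y _ => by ring)

lemma maxp_strict [Nonempty V] (ω : V → V → ℝ) (μ : V → ℝ)
    (hω : ∀ x y, 0 ≤ ω x y) (hμ : ∀ x, 0 < μ x) {K : ℝ} (hK : 0 < K)
    (w : V → ℝ) (h : ∀ x, 0 < graphLap ω μ w x - K * w x) : ∀ x, w x < 0 := by
  obtain ⟨z, hz⟩ := Finite.exists_max w
  have hsum : ∑ y, ω z y * (w y - w z) ≤ 0 :=
    Finset.sum_nonpos fun y _ =>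
      mul_nonpos_of_nonneg_of_nonpos (hω z y) (by linarith [hz y])
  have hzlt : w z < 0 := by
    have h1 := h z
    unfold graphLap at h1
    have h2 : 0 < 1 / μ z := one_div_pos.mpr (hμ z)
    nlinarith [mul_nonneg h2.le (neg_nonneg.2 hsum)]
  intro x; linarith [hz x]

lemma maxp_strong [Nonempty V] (ω : V → V → ℝ) (μ : V → ℝ)
    (hω : ∀ x y, 0 ≤ ω x y) (hμ : ∀ x, 0 < μ x)
    (hconn : ∀ x y : V, x ≠ y → ∃ (n : ℕ) (c : Fin (n + 1) → V),
      c 0 = x ∧ c (Fin.last n) = y ∧ ∀ i : Fin n, 0 < ω (c i.castSucc) (c i.succ))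
    {K : ℝ} (hK : 0 < K) (w : V → ℝ)
    (h : ∀ x, 0 ≤ graphLap ω μ w x - K * w x)
    (x₀ : V) (h0 : 0 < graphLap ω μ w x₀ - K * w x₀) : ∀ x, w x < 0 := by
  have hle : ∀ x, w x ≤ 0 := by
    obtain ⟨z, hz⟩ := Finite.exists_max w
    have hsum : ∑ y, ω z y * (w y - w z) ≤ 0 :=
      Finset.sum_nonpos fun y _ =>
        mul_nonpos_of_nonneg_of_nonpos (hω z y) (by linarith [hz y])
    have hzle : w z ≤ 0 := by
      have h1 := h z
      unfold graphLap at h1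
      have h2 : 0 < 1 / μ z := one_div_pos.mpr (hμ z)
      nlinarith [mul_nonneg h2.le (neg_nonneg.2 hsum)]
    intro x; linarith [hz x]
  intro x
  by_contra hx
  push_neg at hx
  have hx0 : w x = 0 := le_antisymm (hle x) hx
  have hprop : ∀ z, w z = 0 → ∀ y, 0 < ω z y → w y = 0 := by
    intro z hz y hy
    have hnp : ∀ y' ∈ Finset.univ (α := V), ω z y' * w y' ≤ 0 := fun y' _ =>
      mul_nonpos_of_nonneg_of_nonpos (hω z y') (hle y')
    have hsum0 : ∑ y', ω z y' * w y' = 0 := by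
      have h1 : ∑ y', ω z y' * w y' ≤ 0 := Finset.sum_nonpos hnp
      have h2 := h z
      unfold graphLap at h2
      simp only [hz, sub_zero] at h2
      have h3 : 0 < 1 / μ z := one_div_pos.mpr (hμ z)
      nlinarith [mul_nonneg h3.le (neg_nonneg.2 h1)]
    have h5 := (Finset.sum_eq_zero_iff_of_nonpos hnp).mp hsum0 y (Finset.mem_univ y)
    rcases mul_eq_zero.mp h5 with h | h
    · exact absurd h (ne_of_gt hy)
    · exact h
  have hall : ∀ y, w y = 0 := by
    intro y
    by_cases hxy : x = y
    · rw [← hxy]; exact hx0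
    · obtain ⟨n, c, hc0, hcl, hstep⟩ := hconn x y hxy
      have hi : ∀ i : Fin (n + 1), w (c i) = 0 := by
        intro i
        induction i using Fin.induction with
        | zero => rw [hc0]; exact hx0
        | succ i ih => exact hprop _ ih _ (hstep i)
      rw [← hcl]; exact hi _
  have hlp : graphLap ω μ w x₀ = 0 := by
    unfold graphLap; simp [hall]
  rw [hlp, hall x₀] at h0
  simp at h0

end Aux

lemma expDiff {a a' : ℝ} (h1 : a' ≤ a) (h2 : a ≤ 0) :
    Real.exp a - Real.exp a' ≤ a - a' := by
  have h3 := Real.add_one_le_exp (a' - a)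
  have h4 : (a' - a + 1) * Real.exp a ≤ Real.exp (a' - a) * Real.exp a :=
    mul_le_mul_of_nonneg_right h3 (Real.exp_pos a).le
  rw [← Real.exp_add] at h4
  have h5 : Real.exp a ≤ 1 := Real.exp_le_one_iff.mpr h2
  have h6 : Real.exp (a' - a + a) = Real.exp a' := by ring_nf
  rw [h6] at h4
  nlinarith [Real.exp_pos a]

lemma contIntegrand {G : ℝ → ℝ} (hG : ContinuousOn G (Set.Ici 0)) :
    Continuous (fun s : ℝ => 2 * s * G (s ^ 2)) := by
  have h1 : ContinuousOn (fun s : ℝ => G (s ^ 2)) Set.univ :=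
    hG.comp (continuous_pow 2).continuousOn fun s _ => sq_nonneg s
  have h2 : Continuous (fun s : ℝ => G (s ^ 2)) := by
    rw [← continuousOn_univ]; exact h1
  exact (continuous_const.mul continuous_id).mul h2

lemma primFun_one {G : ℝ → ℝ} : primFun G 1 = 0 := by
  simp [primFun, Real.sqrt_one]

lemma primFun_nonneg {G : ℝ → ℝ} (hGpos : ∀ s, 0 ≤ s → 0 < G s)
    {t : ℝ} (ht1 : t ≤ 1) : 0 ≤ primFun G t := by
  apply intervalIntegral.integral_nonneg (Real.sqrt_le_one.mpr ht1)
  intro s hs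
  have hs0 : 0 ≤ s := le_trans (Real.sqrt_nonneg t) hs.1
  have := hGpos (s ^ 2) (sq_nonneg s)
  positivity

lemma primFun_diff {G : ℝ → ℝ} (hGpos : ∀ s, 0 ≤ s → 0 < G s)
    (hGmono : MonotoneOn G (Set.Ici 0)) (hGcont : ContinuousOn G (Set.Ici 0))
    {t t' : ℝ} (h0 : 0 < t') (h1 : t' ≤ t) (h2 : t ≤ 1) :
    primFun G t' - primFun G t ≤ G 1 * (t - t') := by
  have hc := contIntegrand hGcont
  have hsplit :
      (∫ s in Real.sqrt t'..Real.sqrt t, 2 * s * G (s ^ 2)) + primFun G t = primFun G t' := by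
    unfold primFun
    exact intervalIntegral.integral_add_adjacent_intervals
      (hc.intervalIntegrable _ _) (hc.intervalIntegrable _ _)
  have hab : Real.sqrt t' ≤ Real.sqrt t := Real.sqrt_le_sqrt h1
  have hbound : (∫ s in Real.sqrt t'..Real.sqrt t, 2 * s * G (s ^ 2)) ≤
      ∫ s in Real.sqrt t'..Real.sqrt t, 2 * G 1 * s := by
    apply intervalIntegral.integral_mono_on hab (hc.intervalIntegrable _ _)
      ((continuous_const.mul continuous_id').intervalIntegrable _ _)
    intro s hs
    have hs0 : 0 ≤ s := le_trans (Real.sqrt_nonneg t') hs.1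
    have hs1 : s ≤ 1 := le_trans hs.2 (Real.sqrt_le_one.mpr h2)
    have hsq : s ^ 2 ≤ 1 := by nlinarith
    have hG : G (s ^ 2) ≤ G 1 := hGmono (Set.mem_Ici.mpr (sq_nonneg s)) (Set.mem_Ici.mpr zero_le_one) hsq
    show 2 * s * G (s ^ 2) ≤ 2 * G 1 * s
    nlinarith [hGpos (s ^ 2) (sq_nonneg s)]
  have hval : (∫ s in Real.sqrt t'..Real.sqrt t, 2 * G 1 * s) = G 1 * (t - t') := by
    rw [intervalIntegral.integral_const_mul]
    have hid : (∫ x in Real.sqrt t'..Real.sqrt t, x) =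
        ((Real.sqrt t) ^ 2 - (Real.sqrt t') ^ 2) / 2 := by simp
    rw [hid, Real.sq_sqrt h0.le, Real.sq_sqrt (le_trans h0.le h1)]
    ring
  linarith [hsplit, hbound, hval.ge, hval.le]

lemma keyF {G H : ℝ → ℝ}
    (hGpos : ∀ s, 0 ≤ s → 0 < G s) (hHpos : ∀ s, 0 ≤ s → 0 < H s)
    (hGmono : MonotoneOn G (Set.Ici 0)) (hHmono : MonotoneOn H (Set.Ici 0))
    (hGcont : ContinuousOn G (Set.Ici 0))
    {lam K a a' b b' : ℝ} (hlam : 0 < lam) (hK : lam * G 1 * H 1 < K)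
    (haa : a' < a) (ha0 : a ≤ 0) (hbb : b' ≤ b) (hb0 : b ≤ 0) :
    lam * Real.exp b' * H (Real.exp b') * primFun G (Real.exp a') + K * a' <
      lam * Real.exp b * H (Real.exp b) * primFun G (Real.exp a) + K * a := by
  have ht'pos : (0:ℝ) < Real.exp a' := Real.exp_pos a'
  have ht't : Real.exp a' < Real.exp a := Real.exp_lt_exp.2 haa
  have ht1 : Real.exp a ≤ 1 := Real.exp_le_one_iff.mpr ha0
  have hg' : 0 ≤ primFun G (Real.exp a') :=
    primFun_nonneg hGpos (le_trans ht't.le ht1)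
  have hdiff : primFun G (Real.exp a') - primFun G (Real.exp a) ≤
      G 1 * (Real.exp a - Real.exp a') := primFun_diff hGpos hGmono hGcont ht'pos ht't.le ht1
  have hexp : Real.exp a - Real.exp a' ≤ a - a' := expDiff haa.le ha0
  have hG1 : 0 < G 1 := hGpos 1 zero_le_one
  have hH1 : 0 < H 1 := hHpos 1 zero_le_one
  set m' := lam * Real.exp b' * H (Real.exp b') with hm'def
  set m := lam * Real.exp b * H (Real.exp b) with hmdef
  have hHb' : 0 < H (Real.exp b') := hHpos _ (Real.exp_pos b').le
  have hHb : 0 < H (Real.exp b) := hHpos _ (Real.exp_pos b).le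
  have hebb : Real.exp b' ≤ Real.exp b := Real.exp_le_exp.2 hbb
  have hHbb : H (Real.exp b') ≤ H (Real.exp b) :=
    hHmono (Set.mem_Ici.mpr (Real.exp_pos b').le) (Set.mem_Ici.mpr (Real.exp_pos b).le) hebb
  have hm'pos : 0 < m' := by rw [hm'def]; positivity
  have hm'm : m' ≤ m := by
    rw [hm'def, hmdef]
    nlinarith [mul_nonneg (mul_nonneg hlam.le (sub_nonneg.2 hebb)) hHb'.le,
      mul_nonneg (mul_nonneg hlam.le (Real.exp_pos b).le) (sub_nonneg.2 hHbb)]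
  have heb1 : Real.exp b ≤ 1 := Real.exp_le_one_iff.mpr hb0
  have hHb1 : H (Real.exp b) ≤ H 1 := hHmono (Set.mem_Ici.mpr (Real.exp_pos b).le) (Set.mem_Ici.mpr zero_le_one) heb1
  have hmH1 : m ≤ lam * H 1 := by
    rw [hmdef]
    nlinarith [mul_nonneg (mul_nonneg hlam.le (sub_nonneg.2 heb1)) hHb.le,
      mul_nonneg hlam.le (sub_nonneg.2 hHb1)]
  have hmpos : 0 < m := lt_of_lt_of_le hm'pos hm'm
  have f1 : m * primFun G (Real.exp a') - m * primFun G (Real.exp a) ≤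
      m * (G 1 * (Real.exp a - Real.exp a')) := by
    have := mul_le_mul_of_nonneg_left hdiff hmpos.le
    rw [mul_sub] at this
    exact this
  have f2 : m * (G 1 * (Real.exp a - Real.exp a')) ≤ lam * H 1 * (G 1 * (a - a')) := by
    have hnn : 0 ≤ G 1 * (Real.exp a - Real.exp a') := by nlinarith
    have h1 : G 1 * (Real.exp a - Real.exp a') ≤ G 1 * (a - a') :=
      mul_le_mul_of_nonneg_left hexp hG1.le
    exact mul_le_mul hmH1 h1 hnn (by positivity)
  have f3 : m' * primFun G (Real.exp a') ≤ m * primFun G (Real.exp a') :=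
    mul_le_mul_of_nonneg_right hm'm hg'
  have f4 : lam * H 1 * (G 1 * (a - a')) < K * a - K * a' := by
    have h5 : lam * H 1 * G 1 < K := by nlinarith
    have h6 : 0 < a - a' := sub_pos.2 haa
    nlinarith
  linarith


theorem stmt_3
    {V : Type*} [Fintype V] [DecidableEq V]
    (hV : 1 < Fintype.card V)
    (ω : V → V → ℝ) (μ : V → ℝ)
    (hω_nonneg : ∀ x y, 0 ≤ ω x y)
    (hω_symm : ∀ x y, ω x y = ω y x)
    (hω_diag : ∀ x, ω x x = 0)
    (hconn : ∀ x y : V, x ≠ y → ∃ (n : ℕ) (c : Fin (n + 1) → V),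
      c 0 = x ∧ c (Fin.last n) = y ∧ ∀ i : Fin n, 0 < ω (c i.castSucc) (c i.succ))
    (hμ : ∀ x, 0 < μ x)
    (G H : ℝ → ℝ)
    (hGpos : ∀ s, 0 ≤ s → 0 < G s) (hHpos : ∀ s, 0 ≤ s → 0 < H s)
    (hGmono : StrictMonoOn G (Set.Ici 0)) (hHmono : StrictMonoOn H (Set.Ici 0))
    (hGsmooth : ContDiffOn ℝ (⊤ : ℕ∞) G (Set.Ici 0)) (hHsmooth : ContDiffOn ℝ (⊤ : ℕ∞) H (Set.Ici 0))
    (N1 N2 : ℕ) (hN1 : 0 < N1) (hN2 : 0 < N2)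
    (p1 : Fin N1 → V) (p2 : Fin N2 → V)
    (u₀ v₀ : V → ℝ)
    (hu₀ : ∀ x, graphLap ω μ u₀ x =
      -(4 * Real.pi * N1) / graphVol μ + 4 * Real.pi * ∑ j, diracDelta μ (p1 j) x)
    (hv₀ : ∀ x, graphLap ω μ v₀ x =
      -(4 * Real.pi * N2) / graphVol μ + 4 * Real.pi * ∑ j, diracDelta μ (p2 j) x)
    (lam K : ℝ) (hlam : 0 < lam) (hK : lam * G 1 * H 1 < K)
    (u v : ℕ → V → ℝ)
    (hu1 : u 1 = fun x => -u₀ x) (hv1 : v 1 = fun x => -v₀ x)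
    (hiter_u : ∀ n, 1 ≤ n → ∀ x, graphLap ω μ (u (n + 1)) x - K * u (n + 1) x =
      -lam * Real.exp (v₀ x + v n x) * H (Real.exp (v₀ x + v n x)) *
        primFun G (Real.exp (u₀ x + u n x)) - K * u n x + 4 * Real.pi * N1 / graphVol μ)
    (hiter_v : ∀ n, 1 ≤ n → ∀ x, graphLap ω μ (v (n + 1)) x - K * v (n + 1) x =
      -lam * Real.exp (u₀ x + u n x) * G (Real.exp (u₀ x + u n x)) *
        primFun H (Real.exp (v₀ x + v n x)) - K * v n x + 4 * Real.pi * N2 / graphVol μ)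
 :
    ∀ n, 1 ≤ n → ∀ x, u (n + 1) x < u n x ∧ v (n + 1) x < v n x := by
  have hu1y : ∀ y, u 1 y = -u₀ y := fun y => by rw [hu1]
  have hv1y : ∀ y, v 1 y = -v₀ y := fun y => by rw [hv1]
  have hG1 : 0 < G 1 := hGpos 1 zero_le_one
  have hH1 : 0 < H 1 := hHpos 1 zero_le_one
  have hKpos : 0 < K := lt_trans (by positivity) hK
  have hNE : Nonempty V := Fintype.card_pos_iff.mp (by omega)
  have hGm : MonotoneOn G (Set.Ici 0) := hGmono.monotoneOn
  have hHm : MonotoneOn H (Set.Ici 0) := hHmono.monotoneOn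
  have hGc : ContinuousOn G (Set.Ici 0) := hGsmooth.continuousOn
  have hHc : ContinuousOn H (Set.Ici 0) := hHsmooth.continuousOn
  have hδnn : ∀ (p y : V), 0 ≤ diracDelta μ p y := by
    intro p y; unfold diracDelta; split
    · exact le_of_lt (one_div_pos.mpr (hμ p))
    · exact le_rfl
  suffices hS : ∀ m, 1 ≤ m → ∀ x,
      (u (m + 1) x < u m x ∧ v (m + 1) x < v m x) ∧ (u m x ≤ -u₀ x ∧ v m x ≤ -v₀ x) by
    intro n hn x
    exact (hS n hn x).1
  intro m hm
  induction m, hm using Nat.le_induction with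
  | base =>
    -- u part
    have hwu : ∀ y, graphLap ω μ (fun z => u (1 + 1) z + u₀ z) y
        - K * (u (1 + 1) y + u₀ y) = 4 * Real.pi * ∑ j, diracDelta μ (p1 j) y := by
      intro y
      have h2 := hiter_u 1 le_rfl y
      rw [hu1y, hv1y] at h2
      have e1 : v₀ y + -v₀ y = 0 := by ring
      have e2 : u₀ y + -u₀ y = 0 := by ring
      rw [e1, e2, Real.exp_zero, primFun_one] at h2
      have h0 := hu₀ y
      have hlin := graphLap_add ω μ (u (1 + 1)) u₀ y
      rw [hlin, h0]
      linear_combination h2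
    have hku : ∀ y, u (1 + 1) y + u₀ y < 0 := by
      apply maxp_strong ω μ hω_nonneg hμ hconn hKpos (fun z => u (1 + 1) z + u₀ z)
        (x₀ := p1 ⟨0, hN1⟩)
      · intro y
        show (0:ℝ) ≤ graphLap ω μ (fun z => u (1 + 1) z + u₀ z) y - K * (u (1 + 1) y + u₀ y)
        rw [hwu y]
        exact mul_nonneg (by positivity) (Finset.sum_nonneg fun j _ => hδnn _ _)
      · show (0:ℝ) < graphLap ω μ (fun z => u (1 + 1) z + u₀ z) (p1 ⟨0, hN1⟩)
          - K * (u (1 + 1) (p1 ⟨0, hN1⟩) + u₀ (p1 ⟨0, hN1⟩))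
        rw [hwu _]
        apply mul_pos (by positivity)
        refine Finset.sum_pos' (fun j _ => hδnn _ _) ⟨⟨0, hN1⟩, Finset.mem_univ _, ?_⟩
        unfold diracDelta
        rw [if_pos rfl]
        exact one_div_pos.mpr (hμ _)
    -- v part
    have hwv : ∀ y, graphLap ω μ (fun z => v (1 + 1) z + v₀ z) y
        - K * (v (1 + 1) y + v₀ y) = 4 * Real.pi * ∑ j, diracDelta μ (p2 j) y := by
      intro y
      have h2 := hiter_v 1 le_rfl y
      rw [hu1y, hv1y] at h2
      have e1 : v₀ y + -v₀ y = 0 := by ring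
      have e2 : u₀ y + -u₀ y = 0 := by ring
      rw [e1, e2, Real.exp_zero, primFun_one] at h2
      have h0 := hv₀ y
      have hlin := graphLap_add ω μ (v (1 + 1)) v₀ y
      rw [hlin, h0]
      linear_combination h2
    have hkv : ∀ y, v (1 + 1) y + v₀ y < 0 := by
      apply maxp_strong ω μ hω_nonneg hμ hconn hKpos (fun z => v (1 + 1) z + v₀ z)
        (x₀ := p2 ⟨0, hN2⟩)
      · intro y
        show (0:ℝ) ≤ graphLap ω μ (fun z => v (1 + 1) z + v₀ z) y - K * (v (1 + 1) y + v₀ y)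
        rw [hwv y]
        exact mul_nonneg (by positivity) (Finset.sum_nonneg fun j _ => hδnn _ _)
      · show (0:ℝ) < graphLap ω μ (fun z => v (1 + 1) z + v₀ z) (p2 ⟨0, hN2⟩)
          - K * (v (1 + 1) (p2 ⟨0, hN2⟩) + v₀ (p2 ⟨0, hN2⟩))
        rw [hwv _]
        apply mul_pos (by positivity)
        refine Finset.sum_pos' (fun j _ => hδnn _ _) ⟨⟨0, hN2⟩, Finset.mem_univ _, ?_⟩
        unfold diracDelta
        rw [if_pos rfl]
        exact one_div_pos.mpr (hμ _)
    intro x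
    refine ⟨⟨?_, ?_⟩, (hu1y x).le, (hv1y x).le⟩
    · rw [hu1y x]; linarith [hku x]
    · rw [hv1y x]; linarith [hkv x]
  | succ n hn IH =>
    have hu_dec : ∀ y, u (n + 1) y < u n y := fun y => ((IH y).1).1
    have hv_dec : ∀ y, v (n + 1) y < v n y := fun y => ((IH y).1).2
    have hu_bd : ∀ y, u n y ≤ -u₀ y := fun y => ((IH y).2).1
    have hv_bd : ∀ y, v n y ≤ -v₀ y := fun y => ((IH y).2).2
    have hu_bd' : ∀ y, u (n + 1) y ≤ -u₀ y := fun y => ((hu_dec y).trans_le (hu_bd y)).le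
    have hv_bd' : ∀ y, v (n + 1) y ≤ -v₀ y := fun y => ((hv_dec y).trans_le (hv_bd y)).le
    have hK' : lam * H 1 * G 1 < K := by
      have : lam * H 1 * G 1 = lam * G 1 * H 1 := by ring
      linarith
    -- u part
    have hwu : ∀ y, 0 < graphLap ω μ (fun z => u (n + 1 + 1) z - u (n + 1) z) y
        - K * (u (n + 1 + 1) y - u (n + 1) y) := by
      intro y
      have h2 := hiter_u (n + 1) (by omega) y
      have h1 := hiter_u n hn y
      have hlin := graphLap_sub ω μ (u (n + 1 + 1)) (u (n + 1)) y
      have hkey := keyF hGpos hHpos hGm hHm hGc hlam hK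
        (show u₀ y + u (n + 1) y < u₀ y + u n y by linarith [hu_dec y])
        (show u₀ y + u n y ≤ 0 by linarith [hu_bd y])
        (show v₀ y + v (n + 1) y ≤ v₀ y + v n y by linarith [hv_dec y])
        (show v₀ y + v n y ≤ 0 by linarith [hv_bd y])
      rw [hlin]
      linarith [h1, h2, hkey]
    have hku : ∀ y, u (n + 1 + 1) y - u (n + 1) y < 0 :=
      maxp_strict ω μ hω_nonneg hμ hKpos _ hwu
    -- v part
    have hwv : ∀ y, 0 < graphLap ω μ (fun z => v (n + 1 + 1) z - v (n + 1) z) y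
        - K * (v (n + 1 + 1) y - v (n + 1) y) := by
      intro y
      have h2 := hiter_v (n + 1) (by omega) y
      have h1 := hiter_v n hn y
      have hlin := graphLap_sub ω μ (v (n + 1 + 1)) (v (n + 1)) y
      have hkey := keyF hHpos hGpos hHm hGm hHc hlam hK'
        (show v₀ y + v (n + 1) y < v₀ y + v n y by linarith [hv_dec y])
        (show v₀ y + v n y ≤ 0 by linarith [hv_bd y])
        (show u₀ y + u (n + 1) y ≤ u₀ y + u n y by linarith [hu_dec y])
        (show u₀ y + u n y ≤ 0 by linarith [hu_bd y])
      rw [hlin]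
      linarith [h1, h2, hkey]
    have hkv : ∀ y, v (n + 1 + 1) y - v (n + 1) y < 0 :=
      maxp_strict ω μ hω_nonneg hμ hKpos _ hwv
    intro x
    exact ⟨⟨by linarith [hku x], by linarith [hkv x]⟩, hu_bd' x, hv_bd' x⟩
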